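/- Let X be a topological space. The following are equivalent: (1) X is homeomorphic to Spec(M) for some finite commutative monoid M; (2) X is homeomorphic to Spec(M) for some finitely generated commutative monoid M; (3) X is homeomorphic to the underlying space of E(Y, B) for some finite topological space Y with a monoidal base B. -/

import Mathlib

open Set Topology TopologicalSpace

universe u v

/-- An ideal of a commutative monoid: closed under multiplication by arbitrary elements. -/
def IsMonoidIdeal {M : Type*} [CommMonoid M] (I : Set M) : Prop :=
  ∀ x ∈ I, ∀ m : M, x * m ∈ I

/-- A prime ideal of a commutative monoid: an ideal whose complement is a submonoid
(contains `1` and is closed under multiplication). -/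
def IsMonoidPrime {M : Type*} [CommMonoid M] (p : Set M) : Prop :=
  IsMonoidIdeal p ∧ (1 : M) ∉ p ∧ ∀ x y : M, x ∉ p → y ∉ p → x * y ∉ p

/-- The Kato spectrum of a commutative monoid: the set of its prime ideals. -/
def KatoSpec (M : Type*) [CommMonoid M] : Type _ :=
  {p : Set M // IsMonoidPrime p}

/-- The basic open set `D(f) = {p : f ∉ p}`. -/
def KatoD {M : Type*} [CommMonoid M] (f : M) : Set (KatoSpec M) :=
  {p | f ∉ p.1}

/-- The topology on the Kato spectrum, generated by the sets `D(f)`. -/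
instance KatoSpec.instTopologicalSpace (M : Type*) [CommMonoid M] :
    TopologicalSpace (KatoSpec M) :=
  TopologicalSpace.generateFrom (Set.range fun f : M => KatoD f)

/-- A blob: the intersection of all open sets containing some point `a`. -/
def IsBlob {X : Type*} [TopologicalSpace X] (A : Set X) : Prop :=
  ∃ a : X, A = ⋂₀ {U : Set X | IsOpen U ∧ a ∈ U}

/-- Condition (*): whenever an intersection of a family of open blobs is contained in an
open set `V`, some finite subfamily already has intersection contained in `V`. -/
def CondStar (X : Type*) [TopologicalSpace X] : Prop :=
  ∀ S : Set (Set X), (∀ U ∈ S, IsOpen U ∧ IsBlob U) →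
    ∀ V : Set X, IsOpen V → ⋂₀ S ⊆ V →
      ∃ T : Finset (Set X), ↑T ⊆ S ∧ ⋂₀ (T : Set (Set X)) ⊆ V

/-- A monoidal base: a base of open sets containing the whole space and closed under
finite (binary) intersections. -/
structure IsMonoidalBase {X : Type*} [TopologicalSpace X] (B : Set (Set X)) : Prop where
  open_mem : ∀ U ∈ B, IsOpen U
  is_base : ∀ V : Set X, IsOpen V → ∀ x ∈ V, ∃ U ∈ B, x ∈ U ∧ U ⊆ V
  univ_mem : Set.univ ∈ B
  inter_mem : ∀ U ∈ B, ∀ V ∈ B, U ∩ V ∈ B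

/-- `(X, B)` is an 𝕄-complete join semilattice with respect to the explicit data of
a partial order `le` and a supremum operator `s`. -/
def IsMCJSWith {X : Type*} (B : Set (Set X)) (le : X → X → Prop) (s : Set X → X) : Prop :=
  (∀ x, le x x) ∧
  (∀ x y z, le x y → le y z → le x z) ∧
  (∀ x y, le x y → le y x → x = y) ∧
  (∀ A : Set X, (∀ a ∈ A, le a (s A)) ∧ ∀ b : X, (∀ a ∈ A, le a b) → le (s A) b) ∧
  (∀ A : Set X, ∀ U ∈ B, (A ⊆ U ↔ s A ∈ U))

/-- `(X, B)` is an 𝕄-complete join semilattice: there is a partial order on `X` in which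
every subset has a least upper bound, such that for `U ∈ B`, `A ⊆ U ↔ sup A ∈ U`. -/
def MCJS {X : Type*} (B : Set (Set X)) : Prop :=
  ∃ (le : X → X → Prop) (s : Set X → X), IsMCJSWith B le s

/-- An isomorphism of spaces-with-monoidal-bases: a bijection such that both it and its
inverse pull back base elements to base elements. -/
def MIso {X Y : Type*} (B : Set (Set X)) (C : Set (Set Y)) : Prop :=
  ∃ f : X → Y, Function.Bijective f ∧ (∀ V ∈ C, f ⁻¹' V ∈ B) ∧ (∀ U ∈ B, f '' U ∈ C)

/-- The topology on the power set `𝒫(X)` generated by the sets `𝒫(U) = {A | A ⊆ U}`, `U ∈ B`. -/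
def ExpTop {X : Type*} (B : Set (Set X)) : TopologicalSpace (Set X) :=
  TopologicalSpace.generateFrom {s : Set (Set X) | ∃ U ∈ B, s = {A : Set X | A ⊆ U}}

/-- The equivalence relation `A ∼ A'` iff `A` and `A'` belong to the same open sets of `𝒫(X)`. -/
def ExpSetoid {X : Type*} (B : Set (Set X)) : Setoid (Set X) where
  r A A' := ∀ s : Set (Set X), (ExpTop B).IsOpen s → (A ∈ s ↔ A' ∈ s)
  iseqv := ⟨fun _ _ _ => Iff.rfl, fun h s hs => (h s hs).symm,
    fun h h' s hs => (h s hs).trans (h' s hs)⟩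

/-- The exponential `E(X,B)`: the quotient of `𝒫(X)` identifying sets lying in the same
open sets. -/
def ExpSpace {X : Type*} (B : Set (Set X)) : Type _ :=
  Quotient (ExpSetoid B)

/-- The class `[A]` of a subset `A ⊆ X` in `E(X,B)`. -/
def expMk {X : Type*} (B : Set (Set X)) (A : Set X) : ExpSpace B :=
  Quotient.mk (ExpSetoid B) A

/-- The quotient topology on `E(X,B)`. -/
instance ExpSpace.instTopologicalSpace {X : Type*} (B : Set (Set X)) :
    TopologicalSpace (ExpSpace B) :=
  (ExpTop B).coinduced (expMk B)

/-- The basic subset `Ũ = {[A] : A ⊆ U}` of `E(X,B)`. -/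
def expBasic {X : Type*} (B : Set (Set X)) (U : Set X) : Set (ExpSpace B) :=
  {q | ∃ A : Set X, q = expMk B A ∧ A ⊆ U}

/-- The monoidal base `B̃ = {Ũ : U ∈ B}` of `E(X,B)`. -/
def expBase {X : Type*} (B : Set (Set X)) : Set (Set (ExpSpace B)) :=
  {s | ∃ U ∈ B, s = expBasic B U}

/-- The natural map `i : X → E(X,B)`, `x ↦ [{x}]`. -/
def expI {X : Type*} (B : Set (Set X)) (x : X) : ExpSpace B :=
  expMk B {x}

/-- The canonical supremum in `E(X,B)`: the class of the union of all representatives. -/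
def expSup {X : Type*} (B : Set (Set X)) (S : Set (ExpSpace B)) : ExpSpace B :=
  expMk B (⋃₀ {A : Set X | expMk B A ∈ S})

/-- The specialization order: `a ≤ b` iff `b ∈ closure {a}`. -/
def specLE {Y : Type*} [TopologicalSpace Y] (a b : Y) : Prop :=
  b ∈ closure {a}

/-- The commutative monoid `(B, ∩)` attached to a monoidal base `B`, with identity `X`. -/
def baseMonoid {X : Type*} [TopologicalSpace X] {B : Set (Set X)} (hB : IsMonoidalBase B) :
    CommMonoid ↥B where
  mul U V := ⟨U.1 ∩ V.1, hB.inter_mem _ U.2 _ V.2⟩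
  one := ⟨Set.univ, hB.univ_mem⟩
  mul_assoc U V W := Subtype.ext (Set.inter_assoc _ _ _)
  mul_comm U V := Subtype.ext (Set.inter_comm _ _)
  one_mul U := Subtype.ext (Set.univ_inter _)
  mul_one U := Subtype.ext (Set.inter_univ _)


/-! ### auxiliary development -/

section Kato

variable {M : Type*} [CommMonoid M]

lemma katoD_one : KatoD (1 : M) = Set.univ := by
  ext p; simp [KatoD, p.2.2.1]

lemma katoD_mul (f g : M) : KatoD (f * g) = KatoD f ∩ KatoD g := by
  ext p
  constructor
  · intro h
    refine ⟨fun hf => h ?_, fun hg => h ?_⟩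
    · exact p.2.1 f hf g
    · simpa [mul_comm] using p.2.1 g hg f
  · rintro ⟨hf, hg⟩; exact p.2.2.2 f g hf hg

lemma isOpen_katoD (f : M) : IsOpen (KatoD f) :=
  TopologicalSpace.GenerateOpen.basic _ ⟨f, rfl⟩

lemma katoSpec_isOpen_iff {V : Set (KatoSpec M)} :
    IsOpen V ↔ GenerateOpen (Set.range fun f : M => KatoD f) V := Iff.rfl

lemma katoSpec_exists_basic {V : Set (KatoSpec M)} (hV : IsOpen V) :
    ∀ p ∈ V, ∃ f : M, p ∈ KatoD f ∧ KatoD f ⊆ V := by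
  replace hV := katoSpec_isOpen_iff.mp hV
  induction hV with
  | basic s hs =>
      obtain ⟨f, rfl⟩ := hs
      exact fun p hp => ⟨f, hp, subset_rfl⟩
  | univ =>
      refine fun p _ => ⟨1, ?_, ?_⟩
      · simp [katoD_one]
      · simp [katoD_one]
  | inter s t _ _ ihs iht =>
      rintro p ⟨hps, hpt⟩
      obtain ⟨f, hf, hfs⟩ := ihs p hps
      obtain ⟨g, hg, hgt⟩ := iht p hpt
      refine ⟨f * g, ?_, ?_⟩
      · rw [katoD_mul]; exact ⟨hf, hg⟩
      · rw [katoD_mul]; exact fun q hq => ⟨hfs hq.1, hgt hq.2⟩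
  | sUnion S _ ih =>
      rintro p ⟨s, hsS, hps⟩
      obtain ⟨f, hf, hfs⟩ := ih s hsS p hps
      exact ⟨f, hf, hfs.trans (Set.subset_sUnion_of_mem hsS)⟩

lemma katoSpec_isOpen_of {V : Set (KatoSpec M)}
    (h : ∀ p ∈ V, ∃ f : M, p ∈ KatoD f ∧ KatoD f ⊆ V) : IsOpen V := by
  have hV : V = ⋃₀ {s | (∃ f : M, s = KatoD f) ∧ s ⊆ V} := by
    apply Set.Subset.antisymm
    · intro p hp
      obtain ⟨f, hpf, hfV⟩ := h p hp
      exact ⟨KatoD f, ⟨⟨f, rfl⟩, hfV⟩, hpf⟩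
    · rintro p ⟨s, ⟨_, hsV⟩, hps⟩
      exact hsV hps
  rw [hV]
  refine isOpen_sUnion ?_
  rintro s ⟨⟨f, rfl⟩, -⟩
  exact isOpen_katoD f

lemma finite_katoSpec_of_fg (h : Monoid.FG M) : Finite (KatoSpec M) := by
  obtain ⟨S, hScl, hSfin⟩ := Monoid.fg_iff.mp h
  have mulmem : ∀ (p : KatoSpec M) (x y : M), x * y ∈ p.1 ↔ x ∈ p.1 ∨ y ∈ p.1 := by
    intro p x y
    constructor
    · intro hxy
      by_contra hc
      push_neg at hc
      exact p.2.2.2 x y hc.1 hc.2 hxy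
    · rintro (hx | hy)
      · exact p.2.1 x hx y
      · rw [mul_comm]; exact p.2.1 y hy x
  haveI : Finite ↥S := hSfin
  refine Finite.of_injective (fun p : KatoSpec M => fun s : ↥S => s.1 ∈ p.1) ?_
  intro p q hpq
  have key : ∀ x : M, x ∈ p.1 ↔ x ∈ q.1 := by
    intro x
    have hx : x ∈ Submonoid.closure S := by rw [hScl]; trivial
    induction hx using Submonoid.closure_induction with
    | mem y hy => exact iff_of_eq (congrFun hpq ⟨y, hy⟩)
    | one => simp [p.2.2.1, q.2.2.1]
    | mul a b ha hb iha ihb =>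
        rw [mulmem p, mulmem q]
        exact or_congr iha ihb
  exact Subtype.ext (Set.ext key)

end Kato

section Exp

variable {X : Type*} {B : Set (Set X)}

lemma expTop_isOpen_iff {W : Set (Set X)} :
    (ExpTop B).IsOpen W ↔
      GenerateOpen {s | ∃ U ∈ B, s = {A : Set X | A ⊆ U}} W := Iff.rfl

lemma expSetoid_iff_forall {A A' : Set X} :
    (ExpSetoid B).r A A' ↔ ∀ U ∈ B, (A ⊆ U ↔ A' ⊆ U) := by
  constructor
  · intro h U hU
    exact h {C | C ⊆ U} (TopologicalSpace.GenerateOpen.basic _ ⟨U, hU, rfl⟩)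
  · intro h s hs
    replace hs := expTop_isOpen_iff.mp hs
    induction hs with
    | basic t ht =>
        obtain ⟨U, hU, rfl⟩ := ht
        exact h U hU
    | univ => simp
    | inter s t _ _ ihs iht =>
        exact and_congr ihs iht
    | sUnion S _ ih =>
        constructor
        · rintro ⟨t, htS, hAt⟩; exact ⟨t, htS, (ih t htS).mp hAt⟩
        · rintro ⟨t, htS, hAt⟩; exact ⟨t, htS, (ih t htS).mpr hAt⟩

lemma expTop_exists_basic (hBu : Set.univ ∈ B) (hBi : ∀ U ∈ B, ∀ V ∈ B, U ∩ V ∈ B)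
    {W : Set (Set X)} (hW : (ExpTop B).IsOpen W) :
    ∀ A ∈ W, ∃ U ∈ B, A ⊆ U ∧ ∀ A' : Set X, A' ⊆ U → A' ∈ W := by
  replace hW := expTop_isOpen_iff.mp hW
  induction hW with
  | basic t ht =>
      obtain ⟨U, hU, rfl⟩ := ht
      exact fun A hA => ⟨U, hU, hA, fun A' h => h⟩
  | univ => exact fun A _ => ⟨Set.univ, hBu, Set.subset_univ A, fun _ _ => trivial⟩
  | inter s t _ _ ihs iht =>
      rintro A ⟨hAs, hAt⟩
      obtain ⟨U, hU, hAU, hUs⟩ := ihs A hAs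
      obtain ⟨V, hV, hAV, hVt⟩ := iht A hAt
      exact ⟨U ∩ V, hBi U hU V hV, Set.subset_inter hAU hAV,
        fun A' h => ⟨hUs A' (h.trans Set.inter_subset_left),
          hVt A' (h.trans Set.inter_subset_right)⟩⟩
  | sUnion S _ ih =>
      rintro A ⟨t, htS, hAt⟩
      obtain ⟨U, hU, hAU, hUt⟩ := ih t htS A hAt
      exact ⟨U, hU, hAU, fun A' h => ⟨t, htS, hUt A' h⟩⟩

lemma expSpace_isOpen_iff {S : Set (ExpSpace B)} :
    IsOpen S ↔ (ExpTop B).IsOpen (expMk B ⁻¹' S) := Iff.rfl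

lemma mem_expBasic {U : Set X} (hU : U ∈ B) {A : Set X} :
    expMk B A ∈ expBasic B U ↔ A ⊆ U := by
  constructor
  · rintro ⟨A', hA', hA'U⟩
    have h : (ExpSetoid B).r A A' := Quotient.exact hA'
    exact (expSetoid_iff_forall.mp h U hU).mpr hA'U
  · intro h; exact ⟨A, rfl, h⟩

lemma isOpen_expBasic {U : Set X} (hU : U ∈ B) : IsOpen (expBasic B U) := by
  rw [expSpace_isOpen_iff]
  have h : expMk B ⁻¹' expBasic B U = {A : Set X | A ⊆ U} := by
    ext A; exact mem_expBasic hU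
  rw [h]
  exact TopologicalSpace.GenerateOpen.basic _ ⟨U, hU, rfl⟩

end Exp

/-! ### Construction I : `KatoSpec M ≃ₜ ExpSpace (specBase M)` -/

section ConstrI

variable (M : Type*) [CommMonoid M]

def specBase : Set (Set (KatoSpec M)) := {s | ∃ f : M, s = KatoD f}

lemma isMonoidalBase_specBase : IsMonoidalBase (specBase M) where
  open_mem := by rintro U ⟨f, rfl⟩; exact isOpen_katoD f
  is_base := fun V hV p hp => by
    obtain ⟨f, h1, h2⟩ := katoSpec_exists_basic hV p hp
    exact ⟨KatoD f, ⟨f, rfl⟩, h1, h2⟩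
  univ_mem := ⟨1, katoD_one.symm⟩
  inter_mem := by rintro U ⟨f, rfl⟩ V ⟨g, rfl⟩; exact ⟨f * g, (katoD_mul f g).symm⟩

lemma isMonoidPrime_specPhi (A : Set (KatoSpec M)) :
    IsMonoidPrime {f : M | ¬ A ⊆ KatoD f} := by
  refine ⟨?_, ?_, ?_⟩
  · intro x hx m hmem
    refine hx fun p hp => ?_
    have := hmem hp
    rw [katoD_mul] at this
    exact this.1
  · simp only [Set.mem_setOf_eq, not_not, katoD_one]
    exact Set.subset_univ A
  · intro x y hx hy
    simp only [Set.mem_setOf_eq, not_not] at hx hy ⊢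
    rw [katoD_mul]
    exact Set.subset_inter hx hy

def specPhi (A : Set (KatoSpec M)) : KatoSpec M :=
  ⟨{f : M | ¬ A ⊆ KatoD f}, isMonoidPrime_specPhi M A⟩

lemma specPhi_preimage_open {V : Set (KatoSpec M)}
    (hV : GenerateOpen (Set.range fun f : M => KatoD f) V) :
    (ExpTop (specBase M)).IsOpen {A : Set (KatoSpec M) | specPhi M A ∈ V} := by
  induction hV with
  | basic t ht =>
      obtain ⟨f, rfl⟩ := ht
      have h : {A : Set (KatoSpec M) | specPhi M A ∈ KatoD f}
          = {A : Set (KatoSpec M) | A ⊆ KatoD f} := by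
        ext A
        simp [specPhi, KatoD, not_not]
        exact not_not
      rw [h]
      exact TopologicalSpace.GenerateOpen.basic _ ⟨KatoD f, ⟨f, rfl⟩, rfl⟩
  | univ =>
      have h : {A : Set (KatoSpec M) | specPhi M A ∈ Set.univ} = Set.univ := by simp
      rw [h]; exact TopologicalSpace.GenerateOpen.univ
  | inter s t _ _ ihs iht =>
      have h : {A : Set (KatoSpec M) | specPhi M A ∈ s ∩ t}
          = {A | specPhi M A ∈ s} ∩ {A | specPhi M A ∈ t} := rfl
      rw [h]; exact TopologicalSpace.GenerateOpen.inter _ _ ihs iht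
  | sUnion S _ ih =>
      have h : {A : Set (KatoSpec M) | specPhi M A ∈ ⋃₀ S}
          = ⋃₀ ((fun t => {A : Set (KatoSpec M) | specPhi M A ∈ t}) '' S) := by
        ext A; simp
      rw [h]
      refine TopologicalSpace.GenerateOpen.sUnion _ ?_
      rintro s ⟨t, htS, rfl⟩
      exact ih t htS

lemma singleton_preimage_open {W : Set (Set (KatoSpec M))}
    (hW : GenerateOpen {s | ∃ U ∈ specBase M, s = {A : Set (KatoSpec M) | A ⊆ U}} W) :
    IsOpen {p : KatoSpec M | {p} ∈ W} := by
  induction hW with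
  | basic t ht =>
      obtain ⟨U, ⟨f, rfl⟩, rfl⟩ := ht
      have h : {p : KatoSpec M | {p} ∈ {A : Set (KatoSpec M) | A ⊆ KatoD f}} = KatoD f := by
        ext p; simp
      rw [h]; exact isOpen_katoD f
  | univ =>
      have h : {p : KatoSpec M | {p} ∈ (Set.univ : Set (Set (KatoSpec M)))} = Set.univ := by
        simp
      rw [h]; exact isOpen_univ
  | inter s t _ _ ihs iht =>
      have h : {p : KatoSpec M | {p} ∈ s ∩ t} = {p | {p} ∈ s} ∩ {p | {p} ∈ t} := rfl
      rw [h]; exact ihs.inter iht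
  | sUnion S _ ih =>
      have h : {p : KatoSpec M | {p} ∈ ⋃₀ S}
          = ⋃₀ ((fun t => {p : KatoSpec M | {p} ∈ t}) '' S) := by
        ext p; simp
      rw [h]
      refine isOpen_sUnion ?_
      rintro s ⟨t, htS, rfl⟩
      exact ih t htS

def specHomeo : KatoSpec M ≃ₜ ExpSpace (specBase M) where
  toFun p := expI (specBase M) p
  invFun := Quotient.lift (specPhi M) (by
    intro A A' h
    have h' := expSetoid_iff_forall.mp h
    apply Subtype.ext
    ext f
    exact not_congr (h' (KatoD f) ⟨f, rfl⟩))
  left_inv p := by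
    show specPhi M {p} = p
    apply Subtype.ext
    ext f
    simp [specPhi, KatoD, Set.singleton_subset_iff]
  right_inv := by
    refine fun q => Quotient.inductionOn q fun A => ?_
    show expI (specBase M) (specPhi M A) = expMk (specBase M) A
    refine Quotient.sound (expSetoid_iff_forall.mpr ?_)
    rintro U ⟨f, rfl⟩
    simp [expI, specPhi, Set.singleton_subset_iff, KatoD, not_not]
    exact ⟨fun h => not_not.mp (h (Set.mem_singleton _)), fun h x hx => by subst hx; exact not_not.mpr h⟩
  continuous_toFun := by
    rw [continuous_def]
    intro S hS
    replace hS := expTop_isOpen_iff.mp (expSpace_isOpen_iff.mp hS)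
    exact singleton_preimage_open M hS
  continuous_invFun := by
    refine continuous_def.mpr ?_
    intro V hV
    rw [expSpace_isOpen_iff]
    exact specPhi_preimage_open M (katoSpec_isOpen_iff.mp hV)

end ConstrI

/-! ### Construction II : `ExpSpace B ≃ₜ KatoSpec ↥B` for a finite space -/

section ConstrII

variable {Y : Type*} [TopologicalSpace Y] {B : Set (Set Y)} (hB : IsMonoidalBase B)

lemma isMonoidPrime_expPhi (A : Set Y) :
    letI := baseMonoid hB
    IsMonoidPrime {U : ↥B | ¬ A ⊆ U.1} := by
  letI := baseMonoid hB
  refine ⟨?_, ?_, ?_⟩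
  · intro U hU V hmem
    have h : (U * V).1 = U.1 ∩ V.1 := rfl
    rw [h] at hmem
    exact hU (hmem.trans Set.inter_subset_left)
  · have h : ((1 : ↥B) : Set Y) = Set.univ := rfl
    simp [Set.mem_setOf_eq, h]
  · intro U V hU hV
    simp only [Set.mem_setOf_eq, not_not] at hU hV ⊢
    show A ⊆ U.1 ∩ V.1
    exact Set.subset_inter hU hV

def expPhi (A : Set Y) : @KatoSpec ↥B (baseMonoid hB) :=
  ⟨{U : ↥B | ¬ A ⊆ U.1}, isMonoidPrime_expPhi hB A⟩

def expApsi (p : @KatoSpec ↥B (baseMonoid hB)) : Set Y :=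
  {y : Y | ∀ U : ↥B, U ∉ p.1 → y ∈ U.1}

lemma expApsi_subset_iff [Finite Y] (p : @KatoSpec ↥B (baseMonoid hB)) (V : ↥B) :
    expApsi hB p ⊆ V.1 ↔ V ∉ p.1 := by
  letI := baseMonoid hB
  constructor
  · intro hsub hVp
    -- build the finite intersection of all base sets not in p
    classical
    have key : ∀ s : Finset ↥B, (∀ U ∈ s, U ∉ p.1) →
        ∃ W : ↥B, W ∉ p.1 ∧ W.1 = ⋂ U ∈ s, (U : ↥B).1 := by
      intro s
      induction s using Finset.induction_on with
      | empty =>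
          intro _
          refine ⟨1, p.2.2.1, ?_⟩
          simp
          rfl
      | insert U s' hUs ih =>
          intro hall
          obtain ⟨W, hWp, hWeq⟩ := ih fun V hV => hall V (Finset.mem_insert_of_mem hV)
          refine ⟨U * W, p.2.2.2 U W (hall U (Finset.mem_insert_self U s')) hWp, ?_⟩
          have h : (U * W).1 = U.1 ∩ W.1 := rfl
          rw [h, hWeq]
          simp [Finset.mem_insert]
    haveI : Finite ↥B := Subtype.finite
    haveI : Fintype ↥B := Fintype.ofFinite ↥B
    obtain ⟨W, hWp, hWeq⟩ := key ({U : ↥B | U ∉ p.1} : Set ↥B).toFinset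
      (by intro U hU; simpa using hU)
    have hWA : W.1 = expApsi hB p := by
      rw [hWeq]
      ext y
      simp [expApsi]
    -- W ⊆ V, and V ∈ p, so W = V * W ∈ p, contradiction
    have hWV : W.1 ⊆ V.1 := hWA ▸ hsub
    have : V * W = W := Subtype.ext (by
      have h : (V * W).1 = V.1 ∩ W.1 := rfl
      rw [h]
      exact Set.inter_eq_self_of_subset_right hWV)
    exact hWp (this ▸ p.2.1 V hVp W)
  · intro hVp y hy
    exact hy V hVp

lemma expPhi_apsi [Finite Y] (p : @KatoSpec ↥B (baseMonoid hB)) :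
    expPhi hB (expApsi hB p) = p := by
  apply Subtype.ext
  ext V
  show ¬ expApsi hB p ⊆ V.1 ↔ V ∈ p.1
  rw [expApsi_subset_iff hB p V, not_not]

lemma expPhi_preimage_open {V : Set (@KatoSpec ↥B (baseMonoid hB))}
    (hV : GenerateOpen (Set.range fun f : ↥B => @KatoD ↥B (baseMonoid hB) f) V) :
    (ExpTop B).IsOpen {A : Set Y | expPhi hB A ∈ V} := by
  induction hV with
  | basic t ht =>
      obtain ⟨f, rfl⟩ := ht
      have h : {A : Set Y | expPhi hB A ∈ @KatoD ↥B (baseMonoid hB) f}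
          = {A : Set Y | A ⊆ f.1} := by
        ext A
        show ¬ f ∈ {U : ↥B | ¬ A ⊆ U.1} ↔ A ⊆ f.1
        simp only [Set.mem_setOf_eq, not_not]
      rw [h]
      exact TopologicalSpace.GenerateOpen.basic _ ⟨f.1, f.2, rfl⟩
  | univ =>
      have h : {A : Set Y | expPhi hB A ∈ Set.univ} = Set.univ := by simp
      rw [h]; exact TopologicalSpace.GenerateOpen.univ
  | inter s t _ _ ihs iht =>
      have h : {A : Set Y | expPhi hB A ∈ s ∩ t}
          = {A | expPhi hB A ∈ s} ∩ {A | expPhi hB A ∈ t} := rfl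
      rw [h]; exact TopologicalSpace.GenerateOpen.inter _ _ ihs iht
  | sUnion S _ ih =>
      have h : {A : Set Y | expPhi hB A ∈ ⋃₀ S}
          = ⋃₀ ((fun t => {A : Set Y | expPhi hB A ∈ t}) '' S) := by
        ext A; simp
      rw [h]
      refine TopologicalSpace.GenerateOpen.sUnion _ ?_
      rintro s ⟨t, htS, rfl⟩
      exact ih t htS

def expHomeo [Finite Y] : ExpSpace B ≃ₜ @KatoSpec ↥B (baseMonoid hB) :=
  letI := baseMonoid hB
  { toFun := Quotient.lift (expPhi hB) (by
      intro A A' h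
      have h' := expSetoid_iff_forall.mp h
      apply Subtype.ext
      ext U
      exact not_congr (h' U.1 U.2))
    invFun := fun p => expMk B (expApsi hB p)
    left_inv := by
      refine fun q => Quotient.inductionOn q fun A => ?_
      show expMk B (expApsi hB (expPhi hB A)) = expMk B A
      refine Quotient.sound (expSetoid_iff_forall.mpr ?_)
      intro U hU
      rw [expApsi_subset_iff hB (expPhi hB A) ⟨U, hU⟩]
      show ¬ (⟨U, hU⟩ : ↥B) ∈ {V : ↥B | ¬ A ⊆ V.1} ↔ A ⊆ U
      simp only [Set.mem_setOf_eq, not_not]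
    right_inv := fun p => expPhi_apsi hB p
    continuous_toFun := by
      refine continuous_def.mpr ?_
      intro V hV
      rw [expSpace_isOpen_iff]
      exact expPhi_preimage_open hB (katoSpec_isOpen_iff.mp hV)
    continuous_invFun := by
      rw [continuous_def]
      intro S hS
      replace hS := expSpace_isOpen_iff.mp hS
      refine katoSpec_isOpen_of ?_
      intro p hp
      have hpW : expApsi hB p ∈ expMk B ⁻¹' S := hp
      obtain ⟨U, hU, hAU, hUW⟩ := expTop_exists_basic hB.univ_mem hB.inter_mem hS
        (expApsi hB p) hpW
      refine ⟨⟨U, hU⟩, ?_, ?_⟩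
      · exact (expApsi_subset_iff hB p ⟨U, hU⟩).mp hAU
      · intro q hq
        have hqU : expApsi hB q ⊆ U := (expApsi_subset_iff hB q ⟨U, hU⟩).mpr hq
        exact hUW (expApsi hB q) hqU }

end ConstrII


/-- Corollary 4.3 of the paper: a space is homeomorphic to the Kato
spectrum of a finite commutative monoid iff it is homeomorphic to the Kato spectrum of a
finitely generated commutative monoid iff it is homeomorphic to `E(Y,B)` for some finite
space `Y` with monoidal base `B`. -/
theorem stmt17 {X : Type u} [TopologicalSpace X] :
    ((∃ (M : Type u) (_ : CommMonoid M) (_ : Finite M), Nonempty (X ≃ₜ KatoSpec M)) ↔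
      (∃ (M : Type u) (_ : CommMonoid M) (_ : Monoid.FG M), Nonempty (X ≃ₜ KatoSpec M))) ∧
    ((∃ (M : Type u) (_ : CommMonoid M) (_ : Monoid.FG M), Nonempty (X ≃ₜ KatoSpec M)) ↔
      (∃ (Y : Type u) (_ : TopologicalSpace Y) (_ : Finite Y) (B : Set (Set Y)),
        IsMonoidalBase B ∧ Nonempty (X ≃ₜ ExpSpace B))) := by
  have h12 : (∃ (M : Type u) (_ : CommMonoid M) (_ : Finite M), Nonempty (X ≃ₜ KatoSpec M)) →
      (∃ (M : Type u) (_ : CommMonoid M) (_ : Monoid.FG M), Nonempty (X ≃ₜ KatoSpec M)) := by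
    rintro ⟨M, iM, fM, he⟩
    letI := iM; haveI := fM
    exact ⟨M, iM, Monoid.fg_of_finite, he⟩
  have h23 : (∃ (M : Type u) (_ : CommMonoid M) (_ : Monoid.FG M), Nonempty (X ≃ₜ KatoSpec M)) →
      (∃ (Y : Type u) (_ : TopologicalSpace Y) (_ : Finite Y) (B : Set (Set Y)),
        IsMonoidalBase B ∧ Nonempty (X ≃ₜ ExpSpace B)) := by
    rintro ⟨M, iM, fg, ⟨e⟩⟩
    letI := iM
    exact ⟨KatoSpec M, inferInstance, finite_katoSpec_of_fg fg, specBase M,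
      isMonoidalBase_specBase M, ⟨e.trans (specHomeo M)⟩⟩
  have h31 : (∃ (Y : Type u) (_ : TopologicalSpace Y) (_ : Finite Y) (B : Set (Set Y)),
        IsMonoidalBase B ∧ Nonempty (X ≃ₜ ExpSpace B)) →
      (∃ (M : Type u) (_ : CommMonoid M) (_ : Finite M), Nonempty (X ≃ₜ KatoSpec M)) := by
    rintro ⟨Y, tY, fY, B, hB, ⟨e⟩⟩
    letI := tY; haveI := fY
    exact ⟨↥B, baseMonoid hB, Subtype.finite, ⟨e.trans (expHomeo hB)⟩⟩
  exact ⟨⟨h12, fun h => h31 (h23 h)⟩, ⟨h23, fun h => h12 (h31 h)⟩⟩
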